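/- arXiv:1506.05205 — 8 statements merged into one kernel-verified Lean document; each statement's English description precedes it below -/
import Mathlib

section
/- Let V be a finite-dimensional complex vector space, τ a nonzero complex number, and Y, Z endomorphisms of V satisfying [Y,Z] = τ·Z³. Then Z is nilpotent. -/
/-!
Cyclicity of the trace gives `τ · tr (Zⁿ⁺³) = tr (Zⁿ (YZ - ZY)) = 0` for every `n`, so every positive
power of `Z³` is traceless. Over an algebraically closed field of characteristic zero this forces
nilpotency: splitting `V` into generalized eigenspaces `V_μ` turns the vanishing traces into
`∑ μᵏ⁺¹ dim V_μ = 0` for all `k`, and testing against the polynomial `X ∏_{ν ≠ μ} (X - ν)` shows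
`dim V_μ = 0` for every `μ ≠ 0`.
-/

open Module Polynomial

theorem LinearMap.trace_pow_mul_commutator_eq_zero {R M : Type*} [CommRing R] [AddCommGroup M]
    [Module R M] [Module.Free R M] [Module.Finite R M] (A B : Module.End R M) (n : ℕ) :
    trace R M (A ^ n * (B * A - A * B)) = 0 := by
  rw [mul_sub, map_sub, ← mul_assoc, trace_mul_comm R (A ^ n * B), ← mul_assoc, ← mul_assoc,
    ← pow_succ, ← pow_succ', sub_self]

namespace Finset

variable {K : Type*} [Field K] {s : Finset K} {c : K → K}

theorem sum_eval_mul_eq_zero_of_sum_pow_mul_eq_zero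
    (h : ∀ k, ∑ μ ∈ s, μ ^ (k + 1) * c μ = 0) {p : K[X]} (hp : p.coeff 0 = 0) :
    ∑ μ ∈ s, p.eval μ * c μ = 0 := by
  simp_rw [eval_eq_sum_range, sum_mul, sum_comm (s := s)]
  refine sum_eq_zero fun j _ ↦ ?_
  cases j with
  | zero => simp [hp]
  | succ k => simp_rw [mul_assoc, ← mul_sum, h k, mul_zero]

theorem eq_zero_of_sum_pow_mul_eq_zero (h : ∀ k, ∑ μ ∈ s, μ ^ (k + 1) * c μ = 0)
    {μ : K} (hμs : μ ∈ s) (hμ : μ ≠ 0) : c μ = 0 := by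
  classical
  -- `X ∏_{ν ≠ μ} (X - ν)` vanishes on `s ∪ {0}` except at `μ`
  set p : K[X] := X * ∏ ν ∈ s.erase μ, (X - C ν)
  have hp_eval (ν : K) : p.eval ν = ν * ∏ ν' ∈ s.erase μ, (ν - ν') := by
    simp [p, eval_prod]
  have hsum := sum_eval_mul_eq_zero_of_sum_pow_mul_eq_zero h (p := p) (by simp [p])
  rw [sum_eq_single_of_mem μ hμs fun ν hν hνμ ↦ by
    rw [hp_eval, prod_eq_zero (mem_erase.mpr ⟨hνμ, hν⟩) (sub_self ν), mul_zero, zero_mul]] at hsum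
  refine (mul_eq_zero.mp hsum).resolve_left ?_
  rw [hp_eval]
  exact mul_ne_zero hμ (prod_ne_zero_iff.mpr fun ν hν ↦ sub_ne_zero.mpr (ne_of_mem_erase hν).symm)

end Finset

namespace Module.End

variable {K V : Type*} [Field K] [AddCommGroup V] [Module K V] [FiniteDimensional K V]

theorem trace_restrict_maxGenEigenspace_pow (φ : End K V) (μ : K) (k : ℕ) :
    LinearMap.trace K (φ.maxGenEigenspace μ)
        (φ.restrict (φ.mapsTo_maxGenEigenspace_of_comm rfl μ) ^ k) =
      μ ^ k * finrank K (φ.maxGenEigenspace μ) := by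
  set φμ := φ.restrict (φ.mapsTo_maxGenEigenspace_of_comm rfl μ)
  have hnil : IsNilpotent (φμ - algebraMap K _ μ) := by
    convert φ.isNilpotent_restrict_maxGenEigenspace_sub_algebraMap μ using 1
    ext; rfl
  induction k with
  | zero => simp
  | succ k ih =>
    rw [pow_succ, mul_eq_comp,
      LinearMap.trace_comp_eq_mul_of_commute_of_isNilpotent μ ((Commute.refl φμ).pow_left k) hnil,
      ih, pow_succ]
    ring

theorem trace_pow_eq_sum_finrank_maxGenEigenspace [IsAlgClosed K] (φ : End K V) (k : ℕ)
    (s : Finset K) (hs : ∀ μ, φ.maxGenEigenspace μ ≠ ⊥ → μ ∈ s) :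
    LinearMap.trace K V (φ ^ k) = ∑ μ ∈ s, μ ^ k * finrank K (φ.maxGenEigenspace μ) := by
  classical
  have hfin : {μ | φ.maxGenEigenspace μ ≠ ⊥}.Finite :=
    WellFoundedGT.finite_ne_bot_of_iSupIndep φ.independent_maxGenEigenspace
  have hint := DirectSum.isInternal_submodule_of_iSupIndep_of_iSup_eq_top
    φ.independent_maxGenEigenspace φ.iSup_maxGenEigenspace_eq_top
  rw [LinearMap.trace_eq_sum_trace_restrict' hint hfin
    fun μ ↦ φ.mapsTo_maxGenEigenspace_of_comm ((Commute.refl φ).pow_right k) μ]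
  refine (Finset.sum_congr rfl fun μ _ ↦ ?_).trans <| Finset.sum_subset
    (fun μ hμ ↦ hs μ (by simpa using hμ)) fun μ _ hμ ↦ by
      rw [show φ.maxGenEigenspace μ = ⊥ by simpa using hμ, finrank_bot, Nat.cast_zero, mul_zero]
  rw [← trace_restrict_maxGenEigenspace_pow]
  exact congrArg _ (pow_restrict k _).symm

theorem isNilpotent_of_maxGenEigenspace_zero_eq_top (φ : End K V)
    (h : φ.maxGenEigenspace 0 = ⊤) : IsNilpotent φ := by
  rw [LinearMap.isNilpotent_iff_charpoly, LinearMap.charpoly_eq_X_pow_iff]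
  intro v
  obtain ⟨k, hk⟩ := (mem_maxGenEigenspace φ 0 v).mp (h ▸ Submodule.mem_top)
  exact ⟨k, by simpa using hk⟩

theorem isNilpotent_of_forall_trace_pow_succ_eq_zero [IsAlgClosed K] [CharZero K] (φ : End K V)
    (h : ∀ k, LinearMap.trace K V (φ ^ (k + 1)) = 0) : IsNilpotent φ := by
  have hfin : {μ | φ.maxGenEigenspace μ ≠ ⊥}.Finite :=
    WellFoundedGT.finite_ne_bot_of_iSupIndep φ.independent_maxGenEigenspace
  have hmem (μ) (hμ : φ.maxGenEigenspace μ ≠ ⊥) : μ ∈ hfin.toFinset := by simpa using hμ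
  have hbot (μ : K) (hμ : μ ≠ 0) : φ.maxGenEigenspace μ = ⊥ := by
    by_contra hne
    have hrank := Finset.eq_zero_of_sum_pow_mul_eq_zero
      (fun k ↦ (trace_pow_eq_sum_finrank_maxGenEigenspace φ (k + 1) _ hmem).symm.trans (h k))
      (hmem μ hne) hμ
    exact hne (Submodule.finrank_eq_zero.mp (Nat.cast_eq_zero.mp hrank))
  refine isNilpotent_of_maxGenEigenspace_zero_eq_top φ (eq_top_iff.mpr ?_)
  rw [← φ.iSup_maxGenEigenspace_eq_top]
  refine iSup_le fun μ ↦ ?_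
  rcases eq_or_ne μ 0 with rfl | hμ
  · exact le_rfl
  · exact (hbot μ hμ).trans_le bot_le

end Module.End

theorem stmt_0 (V : Type) [AddCommGroup V] [Module ℂ V] [FiniteDimensional ℂ V]
    (τ : ℂ) (hτ : τ ≠ 0) (Y Z : Module.End ℂ V)
    (h : Y * Z - Z * Y = τ • Z ^ 3) :
    IsNilpotent Z := by
  have htrace (n : ℕ) : LinearMap.trace ℂ V (Z ^ (n + 3)) = 0 := by
    have := LinearMap.trace_pow_mul_commutator_eq_zero Z Y n
    rwa [h, mul_smul_comm, map_smul, ← pow_add, smul_eq_zero, or_iff_right hτ] at this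
  have hZ3 : IsNilpotent (Z ^ 3) :=
    Module.End.isNilpotent_of_forall_trace_pow_succ_eq_zero _ fun k ↦ by
      rw [← pow_mul, mul_add, mul_one]
      exact htrace (3 * k)
  exact hZ3.of_pow
end

section
/- For every nilpotent endomorphism Z of a finite-dimensional complex vector space V and every τ ∈ ℂ, there exist Y ∈ End(V) and v ∈ V such that [Y,Z'] = τ·(Z')³ for some Z' conjugate to Z, and v is a cyclic vector for (Y,Z'). Equivalently: for every partition λ of n = dim V there exists a triple (Y,Z,v) with [Y,Z] = τZ³, v cyclic, and Z nilpotent with Jordan type λ. -/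
/-!
By the Jordan normal form, `Z` is conjugate to multiplication by `X` on
`M = ⨁ₖ ℂ[X] ⧸ (X ^ λₖ)` with `λ₀ ≥ λ₁ ≥ ⋯`. The Euler operator `S = X d/dX` preserves every ideal
`(X ^ a)` and satisfies `[S, X] = X`, so `[τ X² S, X] = τ X³`. Adding the `ℂ[X]`-linear shift that
sends the generator of block `k` to the generator of block `k + 1` (a quotient map, because `λ` is
decreasing) leaves this commutator unchanged. Since `S` kills constants, `Y = τ X² S + shift` also
sends each block generator to the next one, so the generator of block `0` is cyclic for `(Y, X)`.
-/

open Polynomial DirectSum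

def IsCyclicVector {R V : Type*} [CommRing R] [AddCommGroup V] [Module R V]
    (Y Z : Module.End R V) (v : V) : Prop :=
  ∀ W : Submodule R V, v ∈ W → (∀ w ∈ W, Y w ∈ W) → (∀ w ∈ W, Z w ∈ W) → W = ⊤

theorem IsCyclicVector.conj {R M V : Type*} [CommRing R] [AddCommGroup M] [Module R M]
    [AddCommGroup V] [Module R V] {Y Z : Module.End R M} {v : M} (h : IsCyclicVector Y Z v)
    (e : M ≃ₗ[R] V) : IsCyclicVector (e.conjAlgEquiv R Y) (e.conjAlgEquiv R Z) (e v) := by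
  intro W hv hY hZ
  have hW : W.comap e.toLinearMap = ⊤ :=
    h _ hv (fun w hw => by simpa using hY _ hw) (fun w hw => by simpa using hZ _ hw)
  rwa [Submodule.comap_equiv_eq_map_symm, Submodule.map_eq_top_iff] at hW

theorem commutator_smul_sq_mul_add {R A : Type*} [CommRing R] [Ring A] [Algebra R A]
    {Z S L : A} (hS : S * Z - Z * S = Z) (hL : Commute L Z) (τ : R) :
    (τ • (Z ^ 2 * S) + L) * Z - Z * (τ • (Z ^ 2 * S) + L) = τ • Z ^ 3 :=
  calc _ = τ • (Z ^ 2 * (S * Z - Z * S)) + (L * Z - Z * L) := by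
        simp only [add_mul, mul_add, smul_mul_assoc, mul_smul_comm, mul_sub, pow_succ, pow_zero,
          one_mul, mul_assoc, smul_sub]
        abel
    _ = τ • Z ^ 3 := by rw [hS, hL.eq, sub_self, add_zero, ← pow_succ]

theorem Submodule.polynomial_smul_mem {R M : Type*} [CommRing R] [AddCommGroup M]
    [Module R[X] M] [Module R M] [IsScalarTower R R[X] M] (W : Submodule R M)
    (hW : ∀ w ∈ W, (X : R[X]) • w ∈ W) (p : R[X]) {w : M} (hw : w ∈ W) : p • w ∈ W := by
  induction p using Polynomial.induction_on with
  | C a => rw [← algebraMap_eq, algebraMap_smul]; exact W.smul_mem a hw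
  | add p q hp hq => rw [add_smul]; exact W.add_mem hp hq
  | monomial n a h => rw [pow_succ', mul_left_comm, mul_smul]; exact hW _ h

noncomputable section

variable (R : Type*) [CommRing R]

def Polynomial.eulerOp : R[X] →ₗ[R] R[X] := LinearMap.mulLeft R X ∘ₗ derivative

theorem Polynomial.X_pow_dvd_eulerOp {p : R[X]} {a : ℕ} (h : X ^ a ∣ p) :
    X ^ a ∣ eulerOp R p :=
  (pow_dvd_pow X (by omega : a ≤ a - 1 + 1)).trans <| by
    rw [pow_succ']
    exact mul_dvd_mul_left X (pow_sub_one_dvd_derivative_of_pow_dvd h)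

abbrev JordanBlock (a : ℕ) : Type _ := R[X] ⧸ (R[X] ∙ (X : R[X]) ^ a)

-- Instance search does not find this through the family `fun k => JordanBlock R (F k)`.
instance (a : ℕ) : AddCommGroup (JordanBlock R a) := Submodule.Quotient.addCommGroup _

abbrev JordanModule {m : ℕ} (F : Fin m → ℕ) : Type _ := ⨁ k, JordanBlock R (F k)

namespace JordanBlock

def euler (a : ℕ) : Module.End R (JordanBlock R a) :=
  (Submodule.Quotient.restrictScalarsEquiv R _).conj <|
    Submodule.mapQ _ _ (eulerOp R) fun _ hp =>
      Ideal.mem_span_singleton.mpr (X_pow_dvd_eulerOp R (Ideal.mem_span_singleton.mp hp))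

theorem euler_mk (a : ℕ) (p : R[X]) :
    euler R a (Submodule.Quotient.mk p) = Submodule.Quotient.mk (X * derivative p) :=
  rfl

theorem euler_X_smul_sub (a : ℕ) (q : JordanBlock R a) :
    euler R a ((X : R[X]) • q) - (X : R[X]) • euler R a q = (X : R[X]) • q := by
  induction q using Submodule.Quotient.induction_on with
  | H p =>
    rw [← Submodule.Quotient.mk_smul, smul_eq_mul, euler_mk, euler_mk,
      ← Submodule.Quotient.mk_smul, smul_eq_mul, ← Submodule.Quotient.mk_sub]
    congr 1
    simp only [derivative_mul, derivative_X, one_mul]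
    ring

end JordanBlock

namespace JordanModule

variable {m : ℕ} (F : Fin m → ℕ)

def mulX : Module.End R (JordanModule R F) := DistribSMul.toLinearMap R _ (X : R[X])

theorem mulX_apply (x : JordanModule R F) : mulX R F x = (X : R[X]) • x := rfl

def euler : Module.End R (JordanModule R F) := lmap fun k => JordanBlock.euler R (F k)

theorem euler_mul_mulX_sub : euler R F * mulX R F - mulX R F * euler R F = mulX R F := by
  refine linearMap_ext R fun k => LinearMap.ext fun q => ?_
  simp only [LinearMap.comp_apply, LinearMap.sub_apply, Module.End.mul_apply, mulX_apply, euler]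
  rw [lof_eq_of, ← of_smul, lmap_of, lmap_of, ← of_smul, ← map_sub,
    JordanBlock.euler_X_smul_sub, of_smul]

def gen (k : Fin m) : JordanModule R F :=
  of (fun k => JordanBlock R (F k)) k (Submodule.Quotient.mk 1)

theorem euler_gen (k : Fin m) : euler R F (gen R F k) = 0 := by
  rw [gen, euler, lmap_of, JordanBlock.euler_mk, derivative_one, mul_zero,
    Submodule.Quotient.mk_zero, map_zero]

theorem smul_gen (k : Fin m) (p : R[X]) :
    p • gen R F k = of (fun k => JordanBlock R (F k)) k (Submodule.Quotient.mk p) := by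
  rw [gen, ← of_smul, ← Submodule.Quotient.mk_smul, smul_eq_mul, mul_one]

theorem eq_top_of_gen_mem {W : Submodule R (JordanModule R F)}
    (hX : ∀ w ∈ W, mulX R F w ∈ W) (hgen : ∀ k, gen R F k ∈ W) : W = ⊤ := by
  refine eq_top_iff.mpr fun x _ => ?_
  induction x using DirectSum.induction_on with
  | zero => exact W.zero_mem
  | of k q =>
    induction q using Submodule.Quotient.induction_on with
    | H p => exact smul_gen R F k p ▸ W.polynomial_smul_mem hX p (hgen k)
  | add x y hx hy => exact W.add_mem (hx trivial) (hy trivial)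

variable {F} (hF : Antitone F)

def shift : JordanModule R F →ₗ[R[X]] JordanModule R F :=
  toModule R[X] (Fin m) _ fun k =>
    if h : (k : ℕ) + 1 < m then
      lof R[X] (Fin m) (fun k => JordanBlock R (F k)) ⟨k + 1, h⟩ ∘ₗ
        Submodule.factor (Ideal.span_singleton_le_span_singleton.mpr
          (pow_dvd_pow X (hF (Fin.mk_le_mk.mpr (Nat.le_succ k)))))
    else 0

theorem shift_gen {k : ℕ} (h : k + 1 < m) :
    shift R hF (gen R F ⟨k, by omega⟩) = gen R F ⟨k + 1, h⟩ := by
  rw [gen, ← lof_eq_of R[X], shift, toModule_lof, dif_pos h, LinearMap.comp_apply]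
  rfl

def cubicPartner (τ : R) : Module.End R (JordanModule R F) :=
  τ • (mulX R F ^ 2 * euler R F) + (shift R hF).restrictScalars R

theorem cubicPartner_mul_mulX_sub (τ : R) :
    cubicPartner R hF τ * mulX R F - mulX R F * cubicPartner R hF τ = τ • mulX R F ^ 3 := by
  have hshift : Commute (S := Module.End R (JordanModule R F))
      ((shift R hF).restrictScalars R) (mulX R F) :=
    LinearMap.ext fun x => map_smul (shift R hF) (X : R[X]) x
  rw [cubicPartner]
  exact commutator_smul_sq_mul_add (A := Module.End R (JordanModule R F))
    (euler_mul_mulX_sub R F) hshift τ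

theorem cubicPartner_gen (τ : R) {k : ℕ} (h : k + 1 < m) :
    cubicPartner R hF τ (gen R F ⟨k, by omega⟩) = gen R F ⟨k + 1, h⟩ := by
  rw [cubicPartner, LinearMap.add_apply, LinearMap.smul_apply, Module.End.mul_apply, euler_gen,
    map_zero, smul_zero, zero_add, LinearMap.restrictScalars_apply, shift_gen]

theorem gen_mem {W : Submodule R (JordanModule R F)} (τ : R) (hm : 0 < m)
    (h₀ : gen R F ⟨0, hm⟩ ∈ W) (hY : ∀ w ∈ W, cubicPartner R hF τ w ∈ W) (k : Fin m) :
    gen R F k ∈ W := by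
  obtain ⟨k, hk⟩ := k
  induction k with
  | zero => exact h₀
  | succ k ih => exact cubicPartner_gen R hF τ hk ▸ hY _ (ih (by omega))

theorem exists_isCyclicVector_cubicPartner (τ : R) :
    ∃ v, IsCyclicVector (cubicPartner R hF τ) (mulX R F) v := by
  rcases m.eq_zero_or_pos with rfl | hm
  · exact ⟨0, fun W _ _ hX => eq_top_of_gen_mem R _ hX finZeroElim⟩
  · exact ⟨gen R F ⟨0, hm⟩, fun W hv hY hX =>
      eq_top_of_gen_mem R _ hX (gen_mem R hF τ hm hv hY)⟩

end JordanModule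

end

theorem exists_equiv_fin_antitone {ι α : Type*} [Fintype ι] [LinearOrder α] (e : ι → α) :
    ∃ (m : ℕ) (c : Fin m ≃ ι), Antitone (e ∘ c) := by
  let b := (Fintype.equivFin ι).symm
  exact ⟨_, (Tuple.sort (OrderDual.toDual ∘ e ∘ b)).trans b,
    Tuple.monotone_sort (OrderDual.toDual ∘ e ∘ b)⟩

theorem Polynomial.associated_pow_X_pow_of_dvd {K : Type*} [Field K] {p : K[X]}
    (hp : Irreducible p) {e n : ℕ} (h : p ^ e ∣ X ^ n) : Associated (p ^ e) (X ^ e) := by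
  rcases e.eq_zero_or_pos with rfl | he
  · simp
  · have hpX : p ∣ X := hp.prime.dvd_of_dvd_pow ((dvd_pow_self p he.ne').trans h)
    exact (hp.associated_of_dvd irreducible_X hpX).pow_pow

section Field

open Module

universe u

variable {K V : Type u} [Field K] [AddCommGroup V] [Module K V] [FiniteDimensional K V]

theorem Module.AEval'.exists_equiv_directSum_jordanBlock {Z : Module.End K V}
    (hZ : IsNilpotent Z) :
    ∃ (ι : Type u) (_ : Fintype ι) (e : ι → ℕ),
      Nonempty (AEval' Z ≃ₗ[K[X]] ⨁ i, JordanBlock K (e i)) := by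
  obtain ⟨n, hn⟩ := hZ
  have htors : IsTorsion K[X] (AEval' Z) :=
    AEval.isTorsion_of_aeval_eq_zero (p := X ^ n) (by simp [hn]) (pow_ne_zero n X_ne_zero)
  obtain ⟨ι, _, p, hp, e, ⟨φ⟩⟩ := equiv_directSum_of_isTorsion htors
  have hXn : X ^ n ∈ annihilator K[X] (⨁ i, K[X] ⧸ K[X] ∙ p i ^ e i) := by
    rw [← φ.annihilator_eq, mem_annihilator]
    intro x
    rw [← (AEval'.of Z).apply_symm_apply x, AEval'.X_pow_smul_of, hn, zero_smul, map_zero]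
  simp_rw [DirectSum, annihilator_dfinsupp, Submodule.mem_iInf, Ideal.annihilator_quotient]
    at hXn
  have hspan (i : ι) : K[X] ∙ p i ^ e i = K[X] ∙ X ^ e i :=
    Ideal.span_singleton_eq_span_singleton.mpr
      (associated_pow_X_pow_of_dvd (hp i) (Ideal.mem_span_singleton.mp (hXn i)))
  exact ⟨ι, inferInstance, e,
    ⟨φ.trans (DFinsupp.mapRange.linearEquiv fun i => Submodule.quotEquivOfEq _ _ (hspan i))⟩⟩

theorem IsNilpotent.exists_jordanModule_equiv {Z : Module.End K V} (hZ : IsNilpotent Z) :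
    ∃ (m : ℕ) (F : Fin m → ℕ), Antitone F ∧
      ∃ e : JordanModule K F ≃ₗ[K] V, e.conjAlgEquiv K (JordanModule.mulX K F) = Z := by
  obtain ⟨ι, _, e, ⟨φ⟩⟩ := AEval'.exists_equiv_directSum_jordanBlock hZ
  obtain ⟨m, c, hc⟩ := exists_equiv_fin_antitone e
  let φ' : AEval' Z ≃ₗ[K[X]] JordanModule K (e ∘ c) :=
    φ.trans (lequivCongrLeft K[X] c.symm)
  let ψ : V ≃ₗ[K] JordanModule K (e ∘ c) := (AEval'.of Z).trans (φ'.restrictScalars K)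
  refine ⟨m, e ∘ c, hc, ψ.symm, LinearMap.ext fun x => ψ.injective ?_⟩
  simp only [LinearEquiv.conjAlgEquiv_apply, LinearMap.comp_apply, LinearEquiv.coe_coe,
    LinearEquiv.symm_symm, LinearEquiv.apply_symm_apply, JordanModule.mulX_apply]
  change X • φ' (AEval'.of Z x) = φ' (AEval'.of Z (Z x))
  rw [← AEval'.X_smul_of, map_smul]

end Field

theorem stmt_6 (V : Type) [AddCommGroup V] [Module ℂ V] [FiniteDimensional ℂ V]
    (τ : ℂ) (Z : Module.End ℂ V) (hZ : IsNilpotent Z) :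
    ∃ (Y : Module.End ℂ V) (g : (Module.End ℂ V)ˣ) (v : V),
      (Y * ((g : Module.End ℂ V) * Z * ↑g⁻¹) - ((g : Module.End ℂ V) * Z * ↑g⁻¹) * Y
        = τ • ((g : Module.End ℂ V) * Z * ↑g⁻¹) ^ 3) ∧
      (∀ W : Submodule ℂ V, v ∈ W → (∀ w ∈ W, Y w ∈ W) →
        (∀ w ∈ W, ((g : Module.End ℂ V) * Z * ↑g⁻¹) w ∈ W) → W = ⊤) := by
  obtain ⟨m, F, hF, e, rfl⟩ := hZ.exists_jordanModule_equiv
  obtain ⟨v, hv⟩ := JordanModule.exists_isCyclicVector_cubicPartner ℂ hF τ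
  refine ⟨e.conjAlgEquiv ℂ (JordanModule.cubicPartner ℂ hF τ), 1, e v, ?_, ?_⟩
  all_goals simp only [Units.val_one, inv_one, one_mul, mul_one]
  · rw [← map_mul, ← map_mul, ← map_sub, JordanModule.cubicPartner_mul_mulX_sub, map_smul,
      map_pow]
  · exact hv.conj e
end

section
/- In the free associative ℂ-algebra on generators x, Y̲, Z̲, ∂ subject to the relations of operators on V[x] = V ⊗ ℂ[x] — namely x commutes with Y̲ and Z̲, [∂,x] = 1 (as operators, ∂ = ∂_x), Y̲Z̲ - Z̲Y̲ = τZ̲³ — the operators y := xY̲ - τx²Z̲²∂ and z := xZ̲ satisfy [x,z] = 0, [y,z] = 0, and [x,y] = τz². -/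
/-!
Work with the ring commutator `⁅a, b⁆ = a * b - b * a`, which is a derivation in each argument.
Since `x` commutes with `Y` and `Z`, it pulls out of every bracket, so `[x, z] = 0` and
`[x, y] = -τ x² Z² [x, ∂] = τ x² Z² = τ z²`. For `[y, z]`, the two summands of `y` contribute
`[x Y, x Z] = x² [Y, Z] = τ x² Z³` and `-τ [x² Z² ∂, x Z] = -τ x² Z² [∂, x] Z = -τ x² Z³`,
which cancel.
-/

attribute [local instance] LieRing.ofAssociativeRing

namespace Ring

variable {A : Type*} [Ring A] {a b c : A}

theorem lie_mul (a b c : A) : ⁅a, b * c⁆ = ⁅a, b⁆ * c + b * ⁅a, c⁆ := by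
  simp only [lie_def, mul_sub, sub_mul, mul_assoc]
  abel

theorem mul_lie (a b c : A) : ⁅a * b, c⁆ = a * ⁅b, c⁆ + ⁅a, c⁆ * b := by
  simp only [lie_def, mul_sub, sub_mul, mul_assoc]
  abel

theorem lie_mul_of_commute (h : Commute a b) : ⁅a, b * c⁆ = b * ⁅a, c⁆ := by
  rw [lie_mul, h.lie_eq, zero_mul, zero_add]

theorem mul_lie_of_commute (h : Commute a c) : ⁅a * b, c⁆ = a * ⁅b, c⁆ := by
  rw [mul_lie, h.lie_eq, zero_mul, add_zero]

end Ring

open Ring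

theorem stmt_9_general {A : Type} [Ring A] [Algebra ℂ A] (τ : ℂ) (x Y Z D : A)
    (hxY : x * Y = Y * x) (hxZ : x * Z = Z * x)
    (hDx : D * x - x * D = 1)
    (hDZ : D * Z = Z * D)
    (hYZ : Y * Z - Z * Y = τ • Z ^ 3)
    (y z : A) (hy : y = x * Y - τ • (x ^ 2 * Z ^ 2 * D)) (hz : z = x * Z) :
    x * z - z * x = 0 ∧ y * z - z * y = 0 ∧ x * y - y * x = τ • z ^ 2 := by
  subst hy hz
  simp only [← lie_def] at hDx hYZ ⊢
  have hxz : Commute x (x * Z) := (Commute.refl x).mul_right hxZ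
  have hz2 : (x * Z) ^ 2 = x ^ 2 * Z ^ 2 := Commute.mul_pow hxZ 2
  have hDz : ⁅D, x * Z⁆ = Z := by
    rw [lie_mul, hDx, Commute.lie_eq hDZ, one_mul, mul_zero, add_zero]
  have hxz2 : Commute x (x ^ 2 * Z ^ 2) :=
    ((Commute.refl x).pow_right 2).mul_right (Commute.pow_right hxZ 2)
  have hYz : ⁅x * Y, x * Z⁆ = x ^ 2 * ⁅Y, Z⁆ := by
    rw [mul_lie_of_commute hxz, lie_mul, (Commute.symm hxY).lie_eq, zero_mul, zero_add,
      ← mul_assoc, sq]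
  refine ⟨hxz.lie_eq, ?_, ?_⟩
  · rw [sub_lie, hYz, smul_lie, mul_lie_of_commute (hz2 ▸ (Commute.refl _).pow_left 2), hDz, hYZ]
    simp only [mul_smul_comm, mul_assoc, ← pow_succ, sub_self]
  · rw [lie_sub, lie_smul, ((Commute.refl x).mul_right hxY).lie_eq,
      lie_mul_of_commute hxz2, ← lie_skew, hDx, hz2]
    simp

theorem stmt_9 {A : Type} [Ring A] [Algebra ℂ A] (τ : ℂ) (x Y Z D : A)
    (hxY : x * Y = Y * x) (hxZ : x * Z = Z * x)
    (hDx : D * x - x * D = 1)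
    (hDY : D * Y = Y * D) (hDZ : D * Z = Z * D)
    (hYZ : Y * Z - Z * Y = τ • Z ^ 3)
    (y z : A) (hy : y = x * Y - τ • (x ^ 2 * Z ^ 2 * D)) (hz : z = x * Z) :
    x * z - z * x = 0 ∧ y * z - z * y = 0 ∧ x * y - y * x = τ • z ^ 2 :=
  stmt_9_general τ x Y Z D hxY hxZ hDx hDZ hYZ y z hy hz
end

section
/- Conversely, suppose x is an invertible operator on a vector space W, and y, z are operators on W satisfying x²Z = xZx, xYxZ = xZxY, and x²Y - xYx = τxZxZ, where Y := x⁻¹y and Z := x⁻¹z. Then [Y,Z] = τZ³. -/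
/-! Cancelling the invertible `x` on the left, the hypotheses say that `x` commutes with `Z`,
that `xY - Yx = τ x Z²` and that `YZx = xZY`. Hence `(YZ - ZY) x = Z (xY - Yx) = τ Z³ x`,
and cancelling `x` on the right gives `[Y, Z] = τ Z³`. -/

theorem Units.commute_of_sq_mul_eq {M : Type*} [Monoid M] (u : Mˣ) {a : M}
    (h : (u : M) ^ 2 * a = u * a * u) : Commute (u : M) a := by
  rw [sq, mul_assoc, mul_assoc] at h
  exact (Units.mul_right_inj u).mp h

theorem mul_sub_mul_eq_smul_pow_three_of_unit {𝕜 R : Type*} [CommSemiring 𝕜] [Ring R]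
    [Algebra 𝕜 R] (τ : 𝕜) (u : Rˣ) {Y Z : R} (hc : Commute (u : R) Z)
    (h2 : (u : R) * Y * u * Z = u * Z * u * Y)
    (h3 : (u : R) ^ 2 * Y - u * Y * u = τ • (u * Z * u * Z)) :
    Y * Z - Z * Y = τ • Z ^ 3 := by
  have hYu : (u : R) * Y - Y * u = τ • (Z * u * Z) := by
    refine (Units.mul_right_inj u).mp ?_
    rw [mul_sub, mul_smul_comm]
    simp only [sq, mul_assoc, hc.eq, hc.left_comm] at h3 ⊢
    exact h3
  have hYZ : Y * Z * u = u * Z * Y := by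
    refine (Units.mul_right_inj u).mp ?_
    simp only [mul_assoc, hc.eq, hc.left_comm] at h2 ⊢
    exact h2
  refine (Units.mul_left_inj u).mp ?_
  calc (Y * Z - Z * Y) * u = Z * (u * Y - Y * u) := by
        rw [sub_mul, hYZ, mul_sub, hc.eq]; simp only [mul_assoc]
    _ = τ • Z ^ 3 * u := by
        rw [hYu, mul_smul_comm, smul_mul_assoc, pow_three]
        simp only [mul_assoc, hc.eq]

theorem stmt_10_general {W : Type} [AddCommGroup W] [Module ℂ W] (τ : ℂ)
    (x : (Module.End ℂ W)ˣ) (Y Z : Module.End ℂ W)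
    (h1 : (x : Module.End ℂ W) ^ 2 * Z = (x : Module.End ℂ W) * Z * x)
    (h2 : (x : Module.End ℂ W) * Y * x * Z = (x : Module.End ℂ W) * Z * x * Y)
    (h3 : (x : Module.End ℂ W) ^ 2 * Y - (x : Module.End ℂ W) * Y * x
        = τ • ((x : Module.End ℂ W) * Z * x * Z)) :
    Y * Z - Z * Y = τ • Z ^ 3 :=
  mul_sub_mul_eq_smul_pow_three_of_unit τ x (x.commute_of_sq_mul_eq h1) h2 h3

theorem stmt_10 {W : Type} [AddCommGroup W] [Module ℂ W] (τ : ℂ)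
    (x : (Module.End ℂ W)ˣ) (y z Y Z : Module.End ℂ W)
    (hY : Y = (↑x⁻¹ : Module.End ℂ W) * y) (hZ : Z = (↑x⁻¹ : Module.End ℂ W) * z)
    (h1 : (x : Module.End ℂ W) ^ 2 * Z = (x : Module.End ℂ W) * Z * x)
    (h2 : (x : Module.End ℂ W) * Y * x * Z = (x : Module.End ℂ W) * Z * x * Y)
    (h3 : (x : Module.End ℂ W) ^ 2 * Y - (x : Module.End ℂ W) * Y * x
        = τ • ((x : Module.End ℂ W) * Z * x * Z)) :
    Y * Z - Z * Y = τ • Z ^ 3 :=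
  stmt_10_general τ x Y Z h1 h2 h3
end

section
/- The degree-n component of the algebra A^τ = ℂ⟨x,y,z⟩/([x,z]=[y,z]=0, [x,y]=τz²) has dimension (n+1)(n+2)/2, i.e. A^τ has the same Hilbert series as the commutative polynomial ring in three variables. -/
noncomputable section

/-- The relations of the algebra `A^τ = ℂ⟨x,y,z⟩/([x,z]=[y,z]=0, [x,y]=τz²)`,
with generators `x = ι 0`, `y = ι 1`, `z = ι 2`. -/
inductive ARel (τ : ℂ) : FreeAlgebra ℂ (Fin 3) → FreeAlgebra ℂ (Fin 3) → Prop
  | xz : ARel τ (FreeAlgebra.ι ℂ 0 * FreeAlgebra.ι ℂ 2) (FreeAlgebra.ι ℂ 2 * FreeAlgebra.ι ℂ 0)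
  | yz : ARel τ (FreeAlgebra.ι ℂ 1 * FreeAlgebra.ι ℂ 2) (FreeAlgebra.ι ℂ 2 * FreeAlgebra.ι ℂ 1)
  | xy : ARel τ (FreeAlgebra.ι ℂ 0 * FreeAlgebra.ι ℂ 1)
      (FreeAlgebra.ι ℂ 1 * FreeAlgebra.ι ℂ 0 + τ • (FreeAlgebra.ι ℂ 2 * FreeAlgebra.ι ℂ 2))

/-- The algebra `A^τ`. -/
abbrev ATau (τ : ℂ) := RingQuot (ARel τ)

/-- The generators `x, y, z` of `A^τ`. -/
def agen (τ : ℂ) (i : Fin 3) : ATau τ := RingQuot.mkAlgHom ℂ (ARel τ) (FreeAlgebra.ι ℂ i)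

/-- The degree-`n` component of `A^τ`: the span of all products of `n` generators. -/
def acomp (τ : ℂ) (n : ℕ) : Submodule ℂ (ATau τ) :=
  Submodule.span ℂ ((fun l : List (Fin 3) => (l.map (agen τ)).prod) '' {l | l.length = n})

/-!
The ordered monomials `z^c y^b x^a` with `a + b + c = n` span the degree-`n` component: moving a
generator past such a monomial only uses the relations, and `x y^(b+1) = y^(b+1) x + (b+1) τ z² y^b`
keeps the degree. They are linearly independent because of the representation of `A^τ` on
`ℂ[X₀, X₁, X₂]` in which `y, z` act by multiplication by `X₁, X₂` and `x` by `X₀ + τ X₂² ∂/∂X₁`: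
applied to `1`, the ordered monomial `z^c y^b x^a` gives the commutative monomial `X₀^a X₁^b X₂^c`.
Hence the dimension is the number of monomials of degree `n` in three variables.
-/

open MvPolynomial Finset

theorem mul_pow_succ_of_mul_eq_add {R : Type*} [Semiring R] {x y c : R}
    (hxy : x * y = y * x + c) (hyc : Commute y c) (n : ℕ) :
    x * y ^ (n + 1) = y ^ (n + 1) * x + (n + 1) • (y ^ n * c) := by
  induction n with
  | zero => simpa using hxy
  | succ n ih =>
    calc x * y ^ (n + 2) = x * y ^ (n + 1) * y := by rw [mul_assoc, ← pow_succ]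
      _ = y ^ (n + 1) * (y * x + c) + (n + 1) • (y ^ n * (c * y)) := by
        rw [ih, add_mul, mul_assoc, hxy, smul_mul_assoc, mul_assoc]
      _ = y ^ (n + 2) * x + (n + 2) • (y ^ (n + 1) * c) := by
        rw [← hyc.eq, mul_add, ← mul_assoc, ← mul_assoc, ← pow_succ, ← pow_succ, add_assoc,
          succ_nsmul' _ (n + 1)]

theorem card_finsuppAntidiag_fin_three (n : ℕ) :
    #((univ : Finset (Fin 3)).finsuppAntidiag n) = (n + 1) * (n + 2) / 2 := by
  rw [card_finsuppAntidiag_nat_eq_choose, card_univ, Fintype.card_fin,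
    show 3 + n - 1 = n + 2 by omega, Nat.choose_symm_add, Nat.choose_two_right, mul_comm]
  rfl

namespace ATau

variable {τ : ℂ}

theorem commute_agen_zero_agen_two : Commute (agen τ 0) (agen τ 2) :=
  (commute_iff_eq _ _).2 <| by simpa [agen] using RingQuot.mkAlgHom_rel ℂ (ARel.xz (τ := τ))

theorem commute_agen_one_agen_two : Commute (agen τ 1) (agen τ 2) :=
  (commute_iff_eq _ _).2 <| by simpa [agen] using RingQuot.mkAlgHom_rel ℂ (ARel.yz (τ := τ))

theorem agen_zero_mul_agen_one :
    agen τ 0 * agen τ 1 = agen τ 1 * agen τ 0 + τ • (agen τ 2 * agen τ 2) := by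
  simpa [agen] using RingQuot.mkAlgHom_rel ℂ (ARel.xy (τ := τ))

variable (τ) in
def ordMonomial (a b c : ℕ) : ATau τ := agen τ 2 ^ c * agen τ 1 ^ b * agen τ 0 ^ a

theorem agen_two_mul_ordMonomial (a b c : ℕ) :
    agen τ 2 * ordMonomial τ a b c = ordMonomial τ a b (c + 1) := by
  simp only [ordMonomial, ← mul_assoc, ← pow_succ']

theorem agen_one_mul_ordMonomial (a b c : ℕ) :
    agen τ 1 * ordMonomial τ a b c = ordMonomial τ a (b + 1) c := by
  simp only [ordMonomial, ← mul_assoc, (commute_agen_one_agen_two.pow_right c).eq]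
  simp only [mul_assoc, ← pow_succ']

theorem agen_zero_mul_ordMonomial_zero (a c : ℕ) :
    agen τ 0 * ordMonomial τ a 0 c = ordMonomial τ (a + 1) 0 c := by
  simp only [ordMonomial, pow_zero, mul_one, ← mul_assoc,
    (commute_agen_zero_agen_two.pow_right c).eq]
  rw [mul_assoc, ← pow_succ']

theorem agen_zero_mul_ordMonomial_succ (a b c : ℕ) :
    agen τ 0 * ordMonomial τ a (b + 1) c =
      ordMonomial τ (a + 1) (b + 1) c + ((b + 1) * τ) • ordMonomial τ a b (c + 2) := by
  have hx := mul_pow_succ_of_mul_eq_add agen_zero_mul_agen_one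
    ((commute_agen_one_agen_two.mul_right commute_agen_one_agen_two).smul_right τ) b
  simp only [ordMonomial, ← mul_assoc, (commute_agen_zero_agen_two.pow_right c).eq]
  have hzy : agen τ 1 ^ b * (agen τ 2 * agen τ 2) = agen τ 2 ^ 2 * agen τ 1 ^ b := by
    rw [← sq, ((commute_agen_one_agen_two.pow_right 2).pow_left b).eq]
  rw [mul_assoc _ (agen τ 0), hx, mul_smul_comm, hzy]
  simp only [mul_add, add_mul, mul_smul_comm, smul_mul_assoc, pow_succ' _ a, pow_add _ c 2,
    ← mul_assoc]
  module

variable (τ) in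
def orderedSpan (n : ℕ) : Submodule ℂ (ATau τ) :=
  Submodule.span ℂ ((fun d : Fin 3 →₀ ℕ => ordMonomial τ (d 0) (d 1) (d 2)) ''
    ↑((univ : Finset (Fin 3)).finsuppAntidiag n))

theorem ordMonomial_mem_orderedSpan {a b c n : ℕ} (h : a + b + c = n) :
    ordMonomial τ a b c ∈ orderedSpan τ n :=
  Submodule.subset_span ⟨Finsupp.equivFunOnFinite.symm ![a, b, c],
    by simp [mem_finsuppAntidiag, Fin.sum_univ_three, h], by simp⟩

theorem agen_mul_ordMonomial_mem_orderedSpan (i : Fin 3) (a b c : ℕ) :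
    agen τ i * ordMonomial τ a b c ∈ orderedSpan τ (a + b + c + 1) := by
  match i with
  | 0 =>
    cases b with
    | zero =>
      rw [agen_zero_mul_ordMonomial_zero]
      exact ordMonomial_mem_orderedSpan (by omega)
    | succ b =>
      rw [agen_zero_mul_ordMonomial_succ]
      exact add_mem (ordMonomial_mem_orderedSpan (by omega))
        (Submodule.smul_mem _ _ (ordMonomial_mem_orderedSpan (by omega)))
  | 1 =>
    rw [agen_one_mul_ordMonomial]
    exact ordMonomial_mem_orderedSpan (by omega)
  | 2 =>
    rw [agen_two_mul_ordMonomial]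
    exact ordMonomial_mem_orderedSpan (by omega)

theorem agen_mul_mem_orderedSpan (i : Fin 3) {n : ℕ} {v : ATau τ} (hv : v ∈ orderedSpan τ n) :
    agen τ i * v ∈ orderedSpan τ (n + 1) := by
  unfold orderedSpan at hv
  induction hv using Submodule.span_induction with
  | mem w hw =>
    obtain ⟨d, hd, rfl⟩ := hw
    have hn : d 0 + d 1 + d 2 = n := by
      simpa [mem_finsuppAntidiag, Fin.sum_univ_three] using hd
    exact hn ▸ agen_mul_ordMonomial_mem_orderedSpan i _ _ _
  | zero => simp
  | add u w _ _ hu hw => simpa [mul_add] using add_mem hu hw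
  | smul r u _ hu => simpa [mul_smul_comm] using Submodule.smul_mem _ r hu

theorem ordMonomial_mem_acomp {a b c n : ℕ} (h : a + b + c = n) :
    ordMonomial τ a b c ∈ acomp τ n := by
  refine Submodule.subset_span
    ⟨List.replicate c 2 ++ List.replicate b 1 ++ List.replicate a 0, by simp; omega, ?_⟩
  simp [ordMonomial, List.prod_replicate, mul_assoc]

theorem acomp_eq_orderedSpan (n : ℕ) : acomp τ n = orderedSpan τ n := by
  apply le_antisymm
  · rw [acomp, Submodule.span_le]
    rintro _ ⟨l, rfl, rfl⟩
    induction l with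
    | nil => simpa [ordMonomial] using (ordMonomial_mem_orderedSpan rfl : ordMonomial τ 0 0 0 ∈ _)
    | cons i l ih => simpa [mul_assoc] using agen_mul_mem_orderedSpan i ih
  · rw [orderedSpan, Submodule.span_le]
    rintro _ ⟨d, hd, rfl⟩
    exact ordMonomial_mem_acomp (by simpa [mem_finsuppAntidiag, Fin.sum_univ_three] using hd)

variable (τ) in
def xOp : Module.End ℂ (MvPolynomial (Fin 3) ℂ) :=
  LinearMap.mulLeft ℂ (X 0) +
    τ • (LinearMap.mulLeft ℂ (X 2 ^ 2) ∘ₗ (pderiv 1).toLinearMap)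

theorem xOp_pow_apply_one (a : ℕ) : (xOp τ ^ a) 1 = X 0 ^ a := by
  induction a with
  | zero => simp
  | succ a ih =>
    rw [pow_succ', Module.End.mul_apply, ih]
    simp [xOp, pow_succ']

variable (τ) in
def polyRep : ATau τ →ₐ[ℂ] Module.End ℂ (MvPolynomial (Fin 3) ℂ) :=
  RingQuot.liftAlgHom ℂ
    ⟨FreeAlgebra.lift ℂ ![xOp τ, LinearMap.mulLeft ℂ (X 1), LinearMap.mulLeft ℂ (X 2)], by
      rintro _ _ ⟨⟩ <;> refine LinearMap.ext fun p => ?_ <;>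
        simp [xOp, pderiv_X_of_ne (show (2 : Fin 3) ≠ 1 by decide), smul_eq_C_mul] <;> ring⟩

theorem polyRep_agen (i : Fin 3) :
    polyRep τ (agen τ i) =
      ![xOp τ, LinearMap.mulLeft ℂ (X 1), LinearMap.mulLeft ℂ (X 2)] i := by
  simp [polyRep, agen]

variable (τ) in
def toMvPolynomial : ATau τ →ₗ[ℂ] MvPolynomial (Fin 3) ℂ :=
  LinearMap.applyₗ 1 ∘ₗ (polyRep τ).toLinearMap

theorem toMvPolynomial_ordMonomial (d : Fin 3 →₀ ℕ) :
    toMvPolynomial τ (ordMonomial τ (d 0) (d 1) (d 2)) = monomial d 1 := by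
  simp [toMvPolynomial, ordMonomial, polyRep_agen, LinearMap.pow_mulLeft, xOp_pow_apply_one,
    monomial_eq, Finsupp.prod_fintype, Fin.prod_univ_three, mul_comm]

theorem linearIndependent_ordMonomial :
    LinearIndependent ℂ fun d : Fin 3 →₀ ℕ => ordMonomial τ (d 0) (d 1) (d 2) := by
  refine LinearIndependent.of_comp (toMvPolynomial τ) ?_
  rw [show _ ∘ _ = _ from funext toMvPolynomial_ordMonomial]
  simpa using (basisMonomials (Fin 3) ℂ).linearIndependent

theorem finrank_orderedSpan (n : ℕ) :
    Module.finrank ℂ (orderedSpan τ n) = (n + 1) * (n + 2) / 2 := by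
  have hli : LinearIndependent ℂ
      fun d : ((univ.finsuppAntidiag n : Finset (Fin 3 →₀ ℕ)) : Set (Fin 3 →₀ ℕ)) =>
        ordMonomial τ (d.1 0) (d.1 1) (d.1 2) :=
    linearIndependent_ordMonomial.comp _ Subtype.val_injective
  rw [orderedSpan, Set.image_eq_range, finrank_span_eq_card hli]
  simpa using card_finsuppAntidiag_fin_three n

end ATau

theorem stmt_12 (τ : ℂ) (n : ℕ) :
    Module.finrank ℂ (acomp τ n) = (n + 1) * (n + 2) / 2 := by
  rw [ATau.acomp_eq_orderedSpan, ATau.finrank_orderedSpan]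

end
end

section
/- In the quadratic dual algebra A^!_τ = ℂ⟨ξ,η,ζ⟩/(ξ²=η²=ξη+ηξ=ξζ+ζξ=ηζ+ζη=0, ζ² = -τ(ξη-ηξ)), each graded component of degree 0, 1, 2, 3 has dimension 1, 3, 3, 1 respectively, and the components of degree > 3 vanish. -/
noncomputable section

/-- The relations of the quadratic dual algebra
`A^!_τ = ℂ⟨ξ,η,ζ⟩/(ξ²=η²=ξη+ηξ=ξζ+ζξ=ηζ+ζη=0, ζ²+τ(ξη-ηξ)=0)`,
with generators `ξ = ι 0`, `η = ι 1`, `ζ = ι 2`. -/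
inductive BRel (τ : ℂ) : FreeAlgebra ℂ (Fin 3) → FreeAlgebra ℂ (Fin 3) → Prop
  | xx : BRel τ (FreeAlgebra.ι ℂ 0 * FreeAlgebra.ι ℂ 0) 0
  | yy : BRel τ (FreeAlgebra.ι ℂ 1 * FreeAlgebra.ι ℂ 1) 0
  | xy : BRel τ (FreeAlgebra.ι ℂ 0 * FreeAlgebra.ι ℂ 1 + FreeAlgebra.ι ℂ 1 * FreeAlgebra.ι ℂ 0) 0
  | xz : BRel τ (FreeAlgebra.ι ℂ 0 * FreeAlgebra.ι ℂ 2 + FreeAlgebra.ι ℂ 2 * FreeAlgebra.ι ℂ 0) 0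
  | yz : BRel τ (FreeAlgebra.ι ℂ 1 * FreeAlgebra.ι ℂ 2 + FreeAlgebra.ι ℂ 2 * FreeAlgebra.ι ℂ 1) 0
  | zz : BRel τ (FreeAlgebra.ι ℂ 2 * FreeAlgebra.ι ℂ 2 +
      τ • (FreeAlgebra.ι ℂ 0 * FreeAlgebra.ι ℂ 1 - FreeAlgebra.ι ℂ 1 * FreeAlgebra.ι ℂ 0)) 0

/-- The quadratic dual algebra `A^!_τ`. -/
abbrev BTau (τ : ℂ) := RingQuot (BRel τ)

/-- The generators `ξ, η, ζ` of `A^!_τ`. -/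
def bgen (τ : ℂ) (i : Fin 3) : BTau τ := RingQuot.mkAlgHom ℂ (BRel τ) (FreeAlgebra.ι ℂ i)

/-- The degree-`n` component of `A^!_τ`: the span of all products of `n` generators. -/
def bcomp (τ : ℂ) (n : ℕ) : Submodule ℂ (BTau τ) :=
  Submodule.span ℂ ((fun l : List (Fin 3) => (l.map (bgen τ)).prod) '' {l | l.length = n})

/-!
The eight monomials `1, ξ, η, ζ, ξη, ξζ, ηζ, ξηζ` form a basis of `A^!_τ` adapted to the grading.
They span: the relations reorder any word into increasing order of the generators, up to a scalar,
and kill it once a generator repeats (`ζ²` turns into `-2τ ξη`), so left multiplication by a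
generator sends a monomial to a multiple of a monomial one degree higher. They are independent:
left multiplication on the formal span of the monomials is an 8-dimensional representation of
`A^!_τ`, in which each monomial sends the vector of `1` to its own basis vector.
-/

/- The sign is carried by the scalar `-1`: on `BTau τ` the negation of `RingQuot` is not
syntactically that of its ring structure, so `rw` and `simp` cannot use `neg_mul` and the like. -/
lemma mul_mul_eq_neg_one_smul_of_add_eq_zero {S R : Type*} [Ring S] [Ring R] [Module S R]
    {x y : R} (h : x * y + y * x = 0) (t : R) : y * (x * t) = (-1 : S) • (x * (y * t)) := by
  rw [← mul_assoc, ← mul_assoc, eq_neg_of_add_eq_zero_right h, neg_one_smul, neg_mul]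

def normalList : Fin 8 → List (Fin 3) :=
  ![[], [0], [1], [2], [0, 1], [0, 2], [1, 2], [0, 1, 2]]

def normalWord (τ : ℂ) (k : Fin 8) : BTau τ := ((normalList k).map (bgen τ)).prod

section

variable {τ : ℂ}

lemma bgen_zero_mul_bgen_zero_mul (t : BTau τ) : bgen τ 0 * (bgen τ 0 * t) = 0 := by
  have h : bgen τ 0 * bgen τ 0 = 0 := by
    simpa [bgen] using RingQuot.mkAlgHom_rel ℂ (BRel.xx (τ := τ))
  rw [← mul_assoc, h, zero_mul]

lemma bgen_one_mul_bgen_one_mul (t : BTau τ) : bgen τ 1 * (bgen τ 1 * t) = 0 := by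
  have h : bgen τ 1 * bgen τ 1 = 0 := by
    simpa [bgen] using RingQuot.mkAlgHom_rel ℂ (BRel.yy (τ := τ))
  rw [← mul_assoc, h, zero_mul]

lemma bgen_one_mul_bgen_zero_mul (t : BTau τ) :
    bgen τ 1 * (bgen τ 0 * t) = (-1 : ℂ) • (bgen τ 0 * (bgen τ 1 * t)) :=
  mul_mul_eq_neg_one_smul_of_add_eq_zero
    (by simpa [bgen] using RingQuot.mkAlgHom_rel ℂ (BRel.xy (τ := τ))) t

lemma bgen_two_mul_bgen_zero_mul (t : BTau τ) :
    bgen τ 2 * (bgen τ 0 * t) = (-1 : ℂ) • (bgen τ 0 * (bgen τ 2 * t)) :=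
  mul_mul_eq_neg_one_smul_of_add_eq_zero
    (by simpa [bgen] using RingQuot.mkAlgHom_rel ℂ (BRel.xz (τ := τ))) t

lemma bgen_two_mul_bgen_one_mul (t : BTau τ) :
    bgen τ 2 * (bgen τ 1 * t) = (-1 : ℂ) • (bgen τ 1 * (bgen τ 2 * t)) :=
  mul_mul_eq_neg_one_smul_of_add_eq_zero
    (by simpa [bgen] using RingQuot.mkAlgHom_rel ℂ (BRel.yz (τ := τ))) t

lemma bgen_two_mul_bgen_two_mul (t : BTau τ) :
    bgen τ 2 * (bgen τ 2 * t) = (-2 * τ) • (bgen τ 0 * (bgen τ 1 * t)) := by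
  have h : bgen τ 2 * bgen τ 2 + τ • (bgen τ 0 * bgen τ 1 - bgen τ 1 * bgen τ 0) = 0 := by
    simpa [bgen] using RingQuot.mkAlgHom_rel ℂ (BRel.zz (τ := τ))
  rw [show bgen τ 1 * bgen τ 0 = (-1 : ℂ) • (bgen τ 0 * bgen τ 1) by
    simpa using bgen_one_mul_bgen_zero_mul (τ := τ) 1] at h
  have h22 : bgen τ 2 * bgen τ 2 = (-2 * τ) • (bgen τ 0 * bgen τ 1) := by
    linear_combination (norm := module) h
  rw [← mul_assoc, h22, smul_mul_assoc, mul_assoc]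

variable (τ) in
def normalSpan (n : ℕ) : Submodule ℂ (BTau τ) :=
  Submodule.span ℂ (Set.range fun k : {k : Fin 8 // (normalList k).length = n} => normalWord τ k)

lemma bgen_mul_normalWord_mem_normalSpan (a : Fin 3) (k : Fin 8) :
    bgen τ a * normalWord τ k ∈ normalSpan τ ((normalList k).length + 1) := by
  fin_cases a <;> fin_cases k <;>
    simp only [normalWord, normalList, Fin.reduceFinMk, Matrix.cons_val, List.map_cons,
      List.map_nil, List.prod_cons, List.prod_nil, List.length_cons, List.length_nil,
      bgen_zero_mul_bgen_zero_mul, bgen_one_mul_bgen_one_mul, bgen_one_mul_bgen_zero_mul,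
      bgen_two_mul_bgen_zero_mul, bgen_two_mul_bgen_one_mul, bgen_two_mul_bgen_two_mul,
      mul_smul_comm, mul_zero, smul_zero, smul_smul]
  all_goals first
    | exact zero_mem _
    | (try refine Submodule.smul_mem _ _ ?_)
      apply Submodule.subset_span
      simp [normalWord, normalList, Fin.exists_fin_succ]

lemma bgen_mul_mem_normalSpan (a : Fin 3) {n : ℕ} {x : BTau τ} (hx : x ∈ normalSpan τ n) :
    bgen τ a * x ∈ normalSpan τ (n + 1) := by
  induction hx using Submodule.span_induction with
  | mem _ hx =>
    obtain ⟨⟨k, rfl⟩, rfl⟩ := hx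
    exact bgen_mul_normalWord_mem_normalSpan a k
  | zero => simp
  | add _ _ _ _ hx hy => rw [mul_add]; exact add_mem hx hy
  | smul c _ _ hx => rw [mul_smul_comm]; exact Submodule.smul_mem _ c hx

lemma list_prod_map_bgen_mem_normalSpan (l : List (Fin 3)) :
    (l.map (bgen τ)).prod ∈ normalSpan τ l.length := by
  induction l with
  | nil => exact Submodule.subset_span ⟨⟨0, rfl⟩, rfl⟩
  | cons a l ih => exact bgen_mul_mem_normalSpan a ih

lemma bcomp_eq_normalSpan (n : ℕ) : bcomp τ n = normalSpan τ n := by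
  apply le_antisymm
  · refine Submodule.span_le.2 ?_
    rintro _ ⟨l, rfl, rfl⟩
    exact list_prod_map_bgen_mem_normalSpan l
  · refine Submodule.span_le.2 ?_
    rintro _ ⟨⟨k, rfl⟩, rfl⟩
    exact Submodule.subset_span ⟨normalList k, rfl, rfl⟩

end

/- The matrices of left multiplication by `ξ`, `η`, `ζ` in the basis
`1, ξ, η, ζ, ξη, ξζ, ηζ, ξηζ`, indexed by `Fin 8` in this order. -/
def xiMat : Matrix (Fin 8) (Fin 8) ℂ := Matrix.of fun i j =>
  if (i = 1 ∧ j = 0) ∨ (i = 4 ∧ j = 2) ∨ (i = 5 ∧ j = 3) ∨ (i = 7 ∧ j = 6) then 1 else 0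

def etaMat : Matrix (Fin 8) (Fin 8) ℂ := Matrix.of fun i j =>
  if (i = 2 ∧ j = 0) ∨ (i = 6 ∧ j = 3) then 1
  else if (i = 4 ∧ j = 1) ∨ (i = 7 ∧ j = 5) then -1 else 0

def zetaMat (τ : ℂ) : Matrix (Fin 8) (Fin 8) ℂ := Matrix.of fun i j =>
  if (i = 3 ∧ j = 0) ∨ (i = 7 ∧ j = 4) then 1
  else if (i = 5 ∧ j = 1) ∨ (i = 6 ∧ j = 2) then -1
  else if i = 4 ∧ j = 3 then -2 * τ else 0

def genMat (τ : ℂ) : Fin 3 → Matrix (Fin 8) (Fin 8) ℂ := ![xiMat, etaMat, zetaMat τ]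

lemma xiMat_mul_self : xiMat * xiMat = 0 := by
  ext i j; fin_cases i <;> fin_cases j <;> simp [xiMat, Matrix.mul_apply]

lemma etaMat_mul_self : etaMat * etaMat = 0 := by
  ext i j; fin_cases i <;> fin_cases j <;> simp [etaMat, Matrix.mul_apply]

lemma xiMat_mul_etaMat_add_etaMat_mul_xiMat : xiMat * etaMat + etaMat * xiMat = 0 := by
  ext i j; fin_cases i <;> fin_cases j <;> simp [xiMat, etaMat, Matrix.mul_apply]

lemma xiMat_mul_zetaMat_add_zetaMat_mul_xiMat (τ : ℂ) :
    xiMat * zetaMat τ + zetaMat τ * xiMat = 0 := by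
  ext i j; fin_cases i <;> fin_cases j <;> simp [xiMat, zetaMat, Matrix.mul_apply]

lemma etaMat_mul_zetaMat_add_zetaMat_mul_etaMat (τ : ℂ) :
    etaMat * zetaMat τ + zetaMat τ * etaMat = 0 := by
  ext i j; fin_cases i <;> fin_cases j <;> simp [etaMat, zetaMat, Matrix.mul_apply]

lemma zetaMat_mul_self_add_smul_commutator (τ : ℂ) :
    zetaMat τ * zetaMat τ + τ • (xiMat * etaMat - etaMat * xiMat) = 0 := by
  ext i j; fin_cases i <;> fin_cases j <;>
    simp [xiMat, etaMat, zetaMat, Matrix.mul_apply] <;> ring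

def matrixRep (τ : ℂ) : BTau τ →ₐ[ℂ] Matrix (Fin 8) (Fin 8) ℂ :=
  RingQuot.liftAlgHom ℂ ⟨FreeAlgebra.lift ℂ (genMat τ), fun _ _ r => by
    cases r <;> simp only [map_mul, map_add, map_sub, map_smul, map_zero, FreeAlgebra.lift_ι_apply]
    exacts [xiMat_mul_self, etaMat_mul_self, xiMat_mul_etaMat_add_etaMat_mul_xiMat,
      xiMat_mul_zetaMat_add_zetaMat_mul_xiMat τ, etaMat_mul_zetaMat_add_zetaMat_mul_etaMat τ,
      zetaMat_mul_self_add_smul_commutator τ]⟩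

lemma matrixRep_bgen (τ : ℂ) (a : Fin 3) : matrixRep τ (bgen τ a) = genMat τ a := by
  simp [matrixRep, bgen, RingQuot.liftAlgHom_mkAlgHom_apply]

lemma matrixRep_normalWord_apply_zero (τ : ℂ) (i k : Fin 8) :
    matrixRep τ (normalWord τ k) i 0 = if i = k then 1 else 0 := by
  rw [normalWord, map_list_prod, List.map_map]
  fin_cases k <;> fin_cases i <;>
    simp [normalList, Function.comp_def, matrixRep_bgen, genMat, xiMat, etaMat, zetaMat,
      Matrix.mul_apply]

lemma linearIndependent_normalWord (τ : ℂ) : LinearIndependent ℂ (normalWord τ) := by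
  refine Fintype.linearIndependent_iff.2 fun c hc k => ?_
  simpa [Matrix.sum_apply, matrixRep_normalWord_apply_zero] using
    congr_arg (fun x => matrixRep τ x k 0) hc

lemma finrank_bcomp (τ : ℂ) (n : ℕ) :
    Module.finrank ℂ (bcomp τ n) = Fintype.card {k : Fin 8 // (normalList k).length = n} := by
  rw [bcomp_eq_normalSpan]
  exact finrank_span_eq_card ((linearIndependent_normalWord τ).comp _ Subtype.val_injective)

lemma bcomp_eq_bot (τ : ℂ) {n : ℕ} (hn : 3 < n) : bcomp τ n = ⊥ := by
  rw [bcomp_eq_normalSpan, normalSpan, Submodule.span_eq_bot]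
  rintro _ ⟨⟨k, hk⟩, rfl⟩
  have : (normalList k).length ≤ 3 := by fin_cases k <;> decide
  omega

theorem stmt_13 (τ : ℂ) :
    Module.finrank ℂ (bcomp τ 0) = 1 ∧
    Module.finrank ℂ (bcomp τ 1) = 3 ∧
    Module.finrank ℂ (bcomp τ 2) = 3 ∧
    Module.finrank ℂ (bcomp τ 3) = 1 ∧
    ∀ n : ℕ, 3 < n → bcomp τ n = ⊥ := by
  refine ⟨?_, ?_, ?_, ?_, fun n hn => bcomp_eq_bot τ hn⟩ <;> rw [finrank_bcomp] <;> decide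

end
end

section
/- Let (Y,Z,v) be a triple on a finite-dimensional vector space V with [Y,Z] = τZ³ and v cyclic, and suppose V decomposes as a direct sum V = V₁ ⊕ V₂ of subspaces stable under both Y and Z, with v = v₁ + v₂. If the spectra of Y|_{V₁} and Y|_{V₂} are disjoint, then v₁ is cyclic for (Y|_{V₁}, Z|_{V₁}) and v₂ is cyclic for (Y|_{V₂}, Z|_{V₂}). -/
/-!
If `W ≤ V₁` contains `v₁` and is invariant under both restrictions, then `W ⊕ V₂` contains
`v₁ + v₂` and is invariant under `Y` and `Z`, hence is all of `V`; intersecting with `V₁` and using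
the modular law gives `W = V₁`.
-/

namespace Submodule

variable {R M : Type*} [Ring R] [AddCommGroup M] [Module R M] {V₁ V₂ : Submodule R M}

lemma mapsTo_map_subtype_sup {f : Module.End R M} (h₁ : ∀ x ∈ V₁, f x ∈ V₁)
    (h₂ : ∀ x ∈ V₂, f x ∈ V₂) {W : Submodule R V₁} (hW : ∀ w ∈ W, f.restrict h₁ w ∈ W) :
    ∀ x ∈ W.map V₁.subtype ⊔ V₂, f x ∈ W.map V₁.subtype ⊔ V₂ := by
  intro x hx
  obtain ⟨_, ⟨w, hw, rfl⟩, y, hy, rfl⟩ := mem_sup.1 hx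
  rw [map_add]
  exact add_mem (mem_sup_left ⟨f.restrict h₁ w, hW w hw, rfl⟩) (mem_sup_right (h₂ y hy))

lemma eq_top_of_map_subtype_sup_eq_top (hd : Disjoint V₁ V₂) {W : Submodule R V₁}
    (h : W.map V₁.subtype ⊔ V₂ = ⊤) : W = ⊤ := by
  have hmap : W.map V₁.subtype = V₁ := by
    simpa [h, hd.symm.eq_bot, eq_comm] using sup_inf_assoc_of_le V₂ (map_subtype_le V₁ W)
  apply map_injective_of_injective V₁.injective_subtype
  rw [hmap, map_subtype_top]

lemma cyclic_restrict_of_cyclic_add (hd : Disjoint V₁ V₂) {Y Z : Module.End R M}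
    (hY₁ : ∀ x ∈ V₁, Y x ∈ V₁) (hY₂ : ∀ x ∈ V₂, Y x ∈ V₂)
    (hZ₁ : ∀ x ∈ V₁, Z x ∈ V₁) (hZ₂ : ∀ x ∈ V₂, Z x ∈ V₂)
    {v₁ v₂ : M} (hv₁ : v₁ ∈ V₁) (hv₂ : v₂ ∈ V₂)
    (hcyc : ∀ W : Submodule R M, v₁ + v₂ ∈ W →
      (∀ w ∈ W, Y w ∈ W) → (∀ w ∈ W, Z w ∈ W) → W = ⊤) :
    ∀ W : Submodule R V₁, (⟨v₁, hv₁⟩ : V₁) ∈ W →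
      (∀ w ∈ W, Y.restrict hY₁ w ∈ W) → (∀ w ∈ W, Z.restrict hZ₁ w ∈ W) → W = ⊤ := by
  intro W hvW hYW hZW
  refine eq_top_of_map_subtype_sup_eq_top hd (hcyc _ ?_ ?_ ?_)
  · exact add_mem (mem_sup_left ⟨⟨v₁, hv₁⟩, hvW, rfl⟩) (mem_sup_right hv₂)
  · exact mapsTo_map_subtype_sup hY₁ hY₂ hYW
  · exact mapsTo_map_subtype_sup hZ₁ hZ₂ hZW

end Submodule

theorem stmt_14_general (V : Type) [AddCommGroup V] [Module ℂ V]
    (Y Z : Module.End ℂ V)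
    (V₁ V₂ : Submodule ℂ V) (hcompl : IsCompl V₁ V₂)
    (hY1 : ∀ x ∈ V₁, Y x ∈ V₁) (hY2 : ∀ x ∈ V₂, Y x ∈ V₂)
    (hZ1 : ∀ x ∈ V₁, Z x ∈ V₁) (hZ2 : ∀ x ∈ V₂, Z x ∈ V₂)
    (v₁ v₂ : V) (hv₁ : v₁ ∈ V₁) (hv₂ : v₂ ∈ V₂)
    (hcyc : ∀ W : Submodule ℂ V, v₁ + v₂ ∈ W →
      (∀ w ∈ W, Y w ∈ W) → (∀ w ∈ W, Z w ∈ W) → W = ⊤) :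
    (∀ W : Submodule ℂ V₁, (⟨v₁, hv₁⟩ : V₁) ∈ W →
      (∀ w ∈ W, Y.restrict hY1 w ∈ W) → (∀ w ∈ W, Z.restrict hZ1 w ∈ W) → W = ⊤) ∧
    (∀ W : Submodule ℂ V₂, (⟨v₂, hv₂⟩ : V₂) ∈ W →
      (∀ w ∈ W, Y.restrict hY2 w ∈ W) → (∀ w ∈ W, Z.restrict hZ2 w ∈ W) → W = ⊤) :=
  ⟨Submodule.cyclic_restrict_of_cyclic_add hcompl.disjoint hY1 hY2 hZ1 hZ2 hv₁ hv₂ hcyc,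
    Submodule.cyclic_restrict_of_cyclic_add hcompl.disjoint.symm hY2 hY1 hZ2 hZ1 hv₂ hv₁
      fun W hW => hcyc W (add_comm v₂ v₁ ▸ hW)⟩

theorem stmt_14 (V : Type) [AddCommGroup V] [Module ℂ V] [FiniteDimensional ℂ V]
    (τ : ℂ) (Y Z : Module.End ℂ V)
    (hrel : Y * Z - Z * Y = τ • Z ^ 3)
    (V₁ V₂ : Submodule ℂ V) (hcompl : IsCompl V₁ V₂)
    (hY1 : ∀ x ∈ V₁, Y x ∈ V₁) (hY2 : ∀ x ∈ V₂, Y x ∈ V₂)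
    (hZ1 : ∀ x ∈ V₁, Z x ∈ V₁) (hZ2 : ∀ x ∈ V₂, Z x ∈ V₂)
    (v₁ v₂ : V) (hv₁ : v₁ ∈ V₁) (hv₂ : v₂ ∈ V₂)
    (hcyc : ∀ W : Submodule ℂ V, v₁ + v₂ ∈ W →
      (∀ w ∈ W, Y w ∈ W) → (∀ w ∈ W, Z w ∈ W) → W = ⊤)
    (hdisj : ∀ μ : ℂ, ¬(Module.End.HasEigenvalue (Y.restrict hY1) μ ∧
      Module.End.HasEigenvalue (Y.restrict hY2) μ)) :
    (∀ W : Submodule ℂ V₁, (⟨v₁, hv₁⟩ : V₁) ∈ W →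
      (∀ w ∈ W, Y.restrict hY1 w ∈ W) → (∀ w ∈ W, Z.restrict hZ1 w ∈ W) → W = ⊤) ∧
    (∀ W : Submodule ℂ V₂, (⟨v₂, hv₂⟩ : V₂) ∈ W →
      (∀ w ∈ W, Y.restrict hY2 w ∈ W) → (∀ w ∈ W, Z.restrict hZ2 w ∈ W) → W = ⊤) :=
  stmt_14_general V Y Z V₁ V₂ hcompl hY1 hY2 hZ1 hZ2 v₁ v₂ hv₁ hv₂ hcyc
end

section
/- Conversely (factorization of cyclicity): if V = V₁ ⊕ V₂ with Y, Z preserving each summand, vᵢ ∈ Vᵢ is cyclic for (Y|_{Vᵢ}, Z|_{Vᵢ}) for i = 1,2, and the spectra of Y|_{V₁} and Y|_{V₂} are disjoint, then v₁ + v₂ is cyclic for (Y,Z) on V. -/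
/-! Disjoint spectra make the minimal polynomials of `Y` on `V₁` and `V₂` coprime, so a Bézout
combination `e = b * minpoly (Y|V₂)` is a polynomial in `Y` acting as the identity on `V₁` and as
zero on `V₂`. A subspace `W` invariant under `Y` and `Z` and containing `v₁ + v₂` thus contains
`e(Y)(v₁ + v₂) = v₁`, hence also `v₂`; by cyclicity it contains `V₁` and `V₂`, so `W = V`. -/

open Polynomial

namespace Module.End

theorem aeval_restrict_apply {R M : Type*} [CommRing R] [AddCommGroup M] [Module R M]
    (f : End R M) {p : Submodule R M} (hf : ∀ x ∈ p, f x ∈ p)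
    (P : R[X]) (x : p) : (aeval (f.restrict hf) P x : M) = aeval f P x := by
  induction P using Polynomial.induction_on' with
  | add P Q hP hQ => simp [hP, hQ]
  | monomial n a => simp [aeval_monomial, pow_restrict n hf, LinearMap.restrict_apply]

theorem isCoprime_minpoly_of_forall_not_hasEigenvalue {K M N : Type*} [Field K] [IsAlgClosed K]
    [AddCommGroup M] [Module K M] [FiniteDimensional K M]
    [AddCommGroup N] [Module K N] [FiniteDimensional K N] {f : End K M} {g : End K N}
    (h : ∀ μ : K, ¬(f.HasEigenvalue μ ∧ g.HasEigenvalue μ)) :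
    IsCoprime (minpoly K f) (minpoly K g) := by
  rw [isCoprime_iff_aeval_ne_zero_of_isAlgClosed (k := K) K]
  intro μ
  simpa [← not_and_or, hasEigenvalue_iff_isRoot] using h μ

theorem mem_of_add_mem_of_isCoprime_minpoly {K M : Type*} [Field K] [AddCommGroup M] [Module K M]
    {f : End K M} {p q W : Submodule K M} (hp : ∀ x ∈ p, f x ∈ p) (hq : ∀ x ∈ q, f x ∈ q)
    (hW : W ≤ W.comap f) (hpq : IsCoprime (minpoly K (f.restrict hp)) (minpoly K (f.restrict hq)))
    {x y : M} (hx : x ∈ p) (hy : y ∈ q) (hxy : x + y ∈ W) : x ∈ W := by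
  obtain ⟨a, b, hab⟩ := hpq
  set e := b * minpoly K (f.restrict hq)
  have hex : aeval f e x = x := by
    have : aeval (f.restrict hp) e = 1 := by
      simpa using congrArg (aeval (f.restrict hp)) hab
    simpa [this] using (aeval_restrict_apply f hp e ⟨x, hx⟩).symm
  have hey : aeval f e y = 0 := by
    have : aeval (f.restrict hq) e = 0 := by simp [e]
    simpa [this] using (aeval_restrict_apply f hq e ⟨y, hy⟩).symm
  simpa [hex, hey] using aeval_apply_smul_mem_of_le_comap hxy e f hW

end Module.End

theorem Submodule.le_of_cyclic_restrict {K M : Type*} [Field K] [AddCommGroup M] [Module K M]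
    {Y Z : Module.End K M} {p W : Submodule K M} (hY : ∀ x ∈ p, Y x ∈ p) (hZ : ∀ x ∈ p, Z x ∈ p)
    {v : M} (hv : v ∈ p)
    (hcyc : ∀ U : Submodule K p, (⟨v, hv⟩ : p) ∈ U →
      (∀ u ∈ U, Y.restrict hY u ∈ U) → (∀ u ∈ U, Z.restrict hZ u ∈ U) → U = ⊤)
    (hvW : v ∈ W) (hYW : ∀ w ∈ W, Y w ∈ W) (hZW : ∀ w ∈ W, Z w ∈ W) : p ≤ W := by
  have htop : W.comap p.subtype = ⊤ :=
    hcyc _ hvW (fun u hu ↦ hYW u hu) (fun u hu ↦ hZW u hu)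
  intro x hx
  simpa using htop.ge (Submodule.mem_top (x := ⟨x, hx⟩))

theorem stmt_15 (V : Type) [AddCommGroup V] [Module ℂ V] [FiniteDimensional ℂ V]
    (Y Z : Module.End ℂ V)
    (V₁ V₂ : Submodule ℂ V) (hcompl : IsCompl V₁ V₂)
    (hY1 : ∀ x ∈ V₁, Y x ∈ V₁) (hY2 : ∀ x ∈ V₂, Y x ∈ V₂)
    (hZ1 : ∀ x ∈ V₁, Z x ∈ V₁) (hZ2 : ∀ x ∈ V₂, Z x ∈ V₂)
    (v₁ v₂ : V) (hv₁ : v₁ ∈ V₁) (hv₂ : v₂ ∈ V₂)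
    (hcyc₁ : ∀ W : Submodule ℂ V₁, (⟨v₁, hv₁⟩ : V₁) ∈ W →
      (∀ w ∈ W, Y.restrict hY1 w ∈ W) → (∀ w ∈ W, Z.restrict hZ1 w ∈ W) → W = ⊤)
    (hcyc₂ : ∀ W : Submodule ℂ V₂, (⟨v₂, hv₂⟩ : V₂) ∈ W →
      (∀ w ∈ W, Y.restrict hY2 w ∈ W) → (∀ w ∈ W, Z.restrict hZ2 w ∈ W) → W = ⊤)
    (hdisj : ∀ μ : ℂ, ¬(Module.End.HasEigenvalue (Y.restrict hY1) μ ∧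
      Module.End.HasEigenvalue (Y.restrict hY2) μ)) :
    ∀ W : Submodule ℂ V, v₁ + v₂ ∈ W →
      (∀ w ∈ W, Y w ∈ W) → (∀ w ∈ W, Z w ∈ W) → W = ⊤ := by
  intro W hvW hYW hZW
  have hcop := Module.End.isCoprime_minpoly_of_forall_not_hasEigenvalue hdisj
  have hv₁W : v₁ ∈ W :=
    Module.End.mem_of_add_mem_of_isCoprime_minpoly hY1 hY2 hYW hcop hv₁ hv₂ hvW
  have hv₂W : v₂ ∈ W := by simpa using W.sub_mem hvW hv₁W
  rw [eq_top_iff, ← hcompl.sup_eq_top]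
  exact sup_le (Submodule.le_of_cyclic_restrict hY1 hZ1 hv₁ hcyc₁ hv₁W hYW hZW)
    (Submodule.le_of_cyclic_restrict hY2 hZ2 hv₂ hcyc₂ hv₂W hYW hZW)
end
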